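/- The girth of the Tanner graph of any 2N × n_v·N matrix H₂ consisting of two block rows of N × N permutation matrices is divisible by 4. -/

import Mathlib

open Matrix

/-- The permutation matrix (over ℕ) associated with a permutation. -/
def permMatrix {N : ℕ} (σ : Equiv.Perm (Fin N)) : Matrix (Fin N) (Fin N) ℕ :=
  Matrix.of fun i j => if σ i = j then 1 else 0

/-- The Tanner graph of an ℕ-valued matrix: the bipartite simple graph on rows ⊕ columns
with an edge between row `i` and column `j` whenever `M i j ≠ 0`. -/
def tanner {α β : Type*} (M : Matrix α β ℕ) : SimpleGraph (α ⊕ β) :=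
  SimpleGraph.fromRel fun u v => ∃ i j, u = Sum.inl i ∧ v = Sum.inr j ∧ M i j ≠ 0

open Classical in
/-- The girth of the Tanner (multi)graph of an ℕ-valued matrix: an entry `≥ 2` is a
multiple edge, giving girth `2`; otherwise the girth of the Tanner simple graph
(`⊤` if there is no cycle). -/
noncomputable def matGirth {α β : Type*} (M : Matrix α β ℕ) : ℕ∞ :=
  if ∃ i j, 2 ≤ M i j then 2 else (tanner M).egirth


/-- The block matrix with two block rows of permutation matrices. -/
def H2mat2 {N nv : ℕ} (P Q : Fin nv → Equiv.Perm (Fin N)) :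
    Matrix (Fin 2 × Fin N) (Fin nv × Fin N) ℕ :=
  Matrix.of fun p q =>
    if p.1 = 0 then permMatrix (P q.1) p.2 q.2 else permMatrix (Q q.1) p.2 q.2

/-! Two distinct neighbours of a column vertex of the Tanner graph of `H₂` lie in different
block rows, since each block is a permutation matrix. A trail entering a column vertex therefore
leaves it towards the other block row, so along a trail between row vertices the block row flips
at every second step. A cycle through a row vertex returns to its block row, hence flips an even
number of times and has length divisible by `4`. -/

open SimpleGraph Sum

lemma ZMod.two_eq_add_one_of_ne {a b : ZMod 2} (h : a ≠ b) : b = a + 1 := by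
  revert a b
  decide

lemma SimpleGraph.Walk.IsTrail.ne_of_cons_cons {V : Type*} {G : SimpleGraph V} {u v w x : V}
    {h : G.Adj u v} {h' : G.Adj v w} {p : G.Walk w x}
    (hp : (Walk.cons h (Walk.cons h' p)).IsTrail) : u ≠ w := by
  rintro rfl
  simp [Sym2.eq_swap] at hp

section Tanner

variable {α β : Type*} {M : Matrix α β ℕ}

@[simp]
lemma tanner_adj_inl_inr {i : α} {j : β} : (tanner M).Adj (inl i) (inr j) ↔ M i j ≠ 0 := by
  simp [tanner]

@[simp]
lemma not_tanner_adj_inl_inl {i i' : α} : ¬ (tanner M).Adj (inl i) (inl i') := by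
  simp [tanner]

@[simp]
lemma not_tanner_adj_inr_inr {j j' : β} : ¬ (tanner M).Adj (inr j) (inr j') := by
  simp [tanner]

variable (M) in
def BlocksSeparateColumns (block : α → ZMod 2) : Prop :=
  ∀ j i i', M i j ≠ 0 → M i' j ≠ 0 → block i = block i' → i = i'

variable {block : α → ZMod 2}

lemma BlocksSeparateColumns.trail_length_parity (hM : BlocksSeparateColumns M block) {i i' : α}
    {w : (tanner M).Walk (inl i) (inl i')} (hw : w.IsTrail) :
    ∃ m, w.length = 2 * m ∧ block i' = block i + m := by
  induction hn : w.length using Nat.strong_induction_on generalizing i w with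
  | _ n ih =>
  cases w with
  | nil => exact ⟨0, by simpa using hn.symm, by simp⟩
  | @cons _ v _ h₁ w =>
  obtain k | j := v
  · exact absurd h₁ not_tanner_adj_inl_inl
  cases w with
  | @cons _ v _ h₂ w =>
  obtain k | j' := v
  swap
  · exact absurd h₂ not_tanner_adj_inr_inr
  rw [Walk.length_cons, Walk.length_cons] at hn
  obtain ⟨m, hm, hk⟩ := ih (n - 2) (by omega) hw.of_cons.of_cons (by omega)
  have hik : i ≠ k := fun h => hw.ne_of_cons_cons (congrArg inl h)
  have hblock : block i ≠ block k :=
    fun h => hik (hM j i k (tanner_adj_inl_inr.mp h₁) (tanner_adj_inl_inr.mp h₂.symm) h)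
  refine ⟨m + 1, by omega, ?_⟩
  rw [hk, ZMod.two_eq_add_one_of_ne hblock]
  push_cast
  ring

lemma BlocksSeparateColumns.four_dvd_length_of_isCycle_inl (hM : BlocksSeparateColumns M block)
    {i : α} {c : (tanner M).Walk (inl i) (inl i)} (hc : c.IsCycle) : 4 ∣ c.length := by
  obtain ⟨m, hm, hblock⟩ := hM.trail_length_parity hc.isCircuit.isTrail
  have : 2 ∣ m := (ZMod.natCast_eq_zero_iff m 2).mp (by simpa using hblock)
  omega

lemma exists_inl_mem_support_of_not_nil {u : α ⊕ β} {c : (tanner M).Walk u u} (hc : ¬ c.Nil) :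
    ∃ i, inl i ∈ c.support := by
  obtain i | j := u
  · exact ⟨i, c.start_mem_support⟩
  cases c with
  | nil => exact absurd Walk.Nil.nil hc
  | @cons _ v _ h c =>
  obtain i | j' := v
  · exact ⟨i, by simp⟩
  · exact absurd h not_tanner_adj_inr_inr

lemma BlocksSeparateColumns.four_dvd_length_of_isCycle (hM : BlocksSeparateColumns M block)
    {u : α ⊕ β} {c : (tanner M).Walk u u} (hc : c.IsCycle) : 4 ∣ c.length := by
  classical
  obtain ⟨i, hi⟩ := exists_inl_mem_support_of_not_nil hc.not_nil
  simpa using hM.four_dvd_length_of_isCycle_inl (hc.rotate hi)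

lemma BlocksSeparateColumns.exists_egirth_eq_four_mul (hM : BlocksSeparateColumns M block)
    (hcyc : (tanner M).egirth ≠ ⊤) : ∃ k : ℕ, (tanner M).egirth = ((4 * k : ℕ) : ℕ∞) := by
  obtain ⟨u, c, hc, hgirth⟩ := exists_egirth_eq_length.mpr (mt egirth_eq_top.mpr hcyc)
  obtain ⟨k, hk⟩ := hM.four_dvd_length_of_isCycle hc
  exact ⟨k, hk ▸ hgirth⟩

end Tanner

section H2

variable {N nv : ℕ} {P Q : Fin nv → Equiv.Perm (Fin N)}

lemma H2mat2_ne_zero_iff {r : Fin 2 × Fin N} {q : Fin nv × Fin N} :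
    H2mat2 P Q r q ≠ 0 ↔ if r.1 = 0 then P q.1 r.2 = q.2 else Q q.1 r.2 = q.2 := by
  simp only [H2mat2, permMatrix, Matrix.of_apply]
  split_ifs <;> simp_all

lemma blocksSeparateColumns_H2mat2 : BlocksSeparateColumns (H2mat2 P Q) (fun r => r.1) := by
  intro q r r' hr hr' (hblock : r.1 = r'.1)
  rw [H2mat2_ne_zero_iff] at hr hr'
  rw [hblock] at hr
  refine Prod.ext hblock ?_
  split_ifs at hr hr'
  · exact (P q.1).injective (hr.trans hr'.symm)
  · exact (Q q.1).injective (hr.trans hr'.symm)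

end H2

theorem stmt7 {N nv : ℕ} (P Q : Fin nv → Equiv.Perm (Fin N))
    (hcyc : (tanner (H2mat2 P Q)).egirth ≠ ⊤) :
    ∃ k : ℕ, (tanner (H2mat2 P Q)).egirth = ((4 * k : ℕ) : ℕ∞) :=
  blocksSeparateColumns_H2mat2.exists_egirth_eq_four_mul hcyc
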